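/- For β > 2 and real parameters α > 0 and x ∈ (0,1], writing Δ = e^{α/β}, the volume of the degree interval [xΔ, Δ] in an (α,β)-power law graph satisfies vol([xΔ,Δ]) = Σ_{i=⌈xΔ⌉}^{⌊Δ⌋} ⌊e^α/i^β⌋·i ≤ (1+o(1))·e^{2α/β}/((β−2)·x^{β−2}) as α → ∞. -/

import Mathlib

/-!
Each term satisfies `⌊e^α / i^β⌋ · i ≤ e^α i^{1-β}`. The sum of `i^{1-β}` over `i ≥ m` is at most
its first term plus `∫_m^∞ t^{1-β} dt = m^{2-β}/(β-2)`, and `m = ⌈xΔ⌉ ≥ xΔ`. Since `e^α = Δ^β`,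
this gives `Δ² / ((β-2) x^{β-2})` plus the first term `Δ / x^{β-1}`, which is of relative size
`(β-2) / (x Δ) → 0`.
-/

open Real Filter

open Finset in
theorem sum_Ioc_rpow_neg_le {p : ℝ} (hp : 1 < p) {m : ℕ} (hm : 0 < m) (N : ℕ) :
    ∑ i ∈ Ioc m N, (i : ℝ) ^ (-p) ≤ (m : ℝ) ^ (1 - p) / (p - 1) := by
  rcases le_or_gt m N with hmN | hNm
  swap
  · rw [Ioc_eq_empty_of_le hNm.le, sum_empty]; positivity
  have hm' : (0 : ℝ) < m := by exact_mod_cast hm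
  have hanti : AntitoneOn (fun t : ℝ => t ^ (-p)) (Set.Icc (m : ℝ) N) := fun s hs t _ hst =>
    rpow_le_rpow_of_nonpos (hm'.trans_le hs.1) hst (by linarith)
  have h0 : (0 : ℝ) ∉ Set.uIcc (m : ℝ) N :=
    Set.notMem_uIcc_of_lt hm' (hm'.trans_le (by exact_mod_cast hmN))
  calc ∑ i ∈ Ioc m N, (i : ℝ) ^ (-p)
      = ∑ i ∈ Ico m N, ((i + 1 : ℕ) : ℝ) ^ (-p) := by
        rw [sum_Ico_add' (fun i : ℕ => (i : ℝ) ^ (-p)), Ico_add_one_add_one_eq_Ioc]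
    _ ≤ ∫ t in (m : ℝ)..N, t ^ (-p) := hanti.sum_le_integral_Ico hmN
    _ = ((m : ℝ) ^ (1 - p) - (N : ℝ) ^ (1 - p)) / (p - 1) := by
        rw [integral_rpow (Or.inr ⟨by linarith, h0⟩), neg_add_eq_sub, ← neg_sub p 1, div_neg,
          ← neg_div, neg_sub]
    _ ≤ (m : ℝ) ^ (1 - p) / (p - 1) := by
        gcongr
        exact sub_le_self _ (by positivity)

open Finset in
theorem sum_Icc_ceil_rpow_neg_le {p : ℝ} (hp : 1 < p) {y : ℝ} (hy : 0 < y) (N : ℕ) :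
    ∑ i ∈ Icc ⌈y⌉₊ N, (i : ℝ) ^ (-p) ≤ y ^ (-p) + y ^ (1 - p) / (p - 1) := by
  have hm : 0 < ⌈y⌉₊ := Nat.ceil_pos.2 hy
  rcases le_or_gt ⌈y⌉₊ N with hmN | hNm
  swap
  · rw [Icc_eq_empty_of_lt hNm, sum_empty]
    have : 0 < p - 1 := by linarith
    positivity
  have hym : y ≤ ⌈y⌉₊ := Nat.le_ceil y
  rw [← add_sum_Ioc_eq_sum_Icc hmN]
  gcongr ?_ + ?_
  · exact rpow_le_rpow_of_nonpos hy hym (by linarith)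
  · refine (sum_Ioc_rpow_neg_le hp hm N).trans ?_
    gcongr ?_ / _
    exact rpow_le_rpow_of_nonpos hy hym (by linarith)

theorem natFloor_div_rpow_mul_le {c : ℝ} (hc : 0 ≤ c) (β : ℝ) (i : ℕ) :
    (⌊c / (i : ℝ) ^ β⌋₊ : ℝ) * i ≤ c * (i : ℝ) ^ (1 - β) := by
  rcases i.eq_zero_or_pos with rfl | hi
  · simp only [Nat.cast_zero, mul_zero]; positivity
  have hi' : (0 : ℝ) < i := by exact_mod_cast hi
  calc (⌊c / (i : ℝ) ^ β⌋₊ : ℝ) * i ≤ c / (i : ℝ) ^ β * i := by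
        gcongr; exact Nat.floor_le (by positivity)
    _ = c * (i : ℝ) ^ (1 - β) := by
        rw [rpow_sub hi', rpow_one]; ring

theorem exp_mul_powerLaw_tail_bound_eq {α β x : ℝ} (hβ : β ≠ 0) (hβ2 : β - 2 ≠ 0) (hx : 0 < x) :
    exp α * ((x * exp (α / β)) ^ (1 - β) + (x * exp (α / β)) ^ (2 - β) / (β - 2)) =
      (1 + (β - 2) / x * exp (-(α / β))) * exp (2 * α / β) / ((β - 2) * x ^ (β - 2)) := by
  set E := exp (α / β) with hE
  have hEpos : 0 < E := exp_pos _
  have hexpα : exp α = E ^ β := by rw [hE, ← exp_mul, div_mul_cancel₀ α hβ]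
  have hexp2 : exp (2 * α / β) = E ^ 2 := by rw [hE, ← exp_nat_mul]; ring_nf
  have hE1 : E ^ β * E ^ (1 - β) = E := by rw [← rpow_add hEpos]; simp
  have hE2 : E ^ β * E ^ (2 - β) = E ^ 2 := by
    rw [← rpow_add hEpos, ← rpow_natCast]; norm_num
  have hx1 : x ^ (1 - β) = x⁻¹ * (x ^ (β - 2))⁻¹ := by
    rw [← rpow_neg_one x, ← rpow_neg hx.le, ← rpow_add hx]; ring_nf
  have hx2 : x ^ (2 - β) = (x ^ (β - 2))⁻¹ := by rw [← rpow_neg hx.le, neg_sub]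
  rw [mul_rpow hx.le hEpos.le, mul_rpow hx.le hEpos.le, hexpα, hexp2, exp_neg, ← hE]
  calc E ^ β * (x ^ (1 - β) * E ^ (1 - β) + x ^ (2 - β) * E ^ (2 - β) / (β - 2))
      = x ^ (1 - β) * (E ^ β * E ^ (1 - β)) + x ^ (2 - β) * (E ^ β * E ^ (2 - β)) / (β - 2) := by
        ring
    _ = _ := by
        rw [hE1, hE2, hx1, hx2]
        field_simp
        ring

theorem stmt_12_general (β : ℝ) (hβ : 2 < β) (x : ℝ) (hx0 : 0 < x) :
    ∃ f : ℝ → ℝ, Tendsto f atTop (nhds 0) ∧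
      ∀ α : ℝ, 0 < α →
        (∑ i ∈ Finset.Icc ⌈x * Real.exp (α / β)⌉₊ ⌊Real.exp (α / β)⌋₊,
            (⌊Real.exp α / (i : ℝ) ^ β⌋₊ : ℝ) * (i : ℝ)) ≤
          (1 + f α) * Real.exp (2 * α / β) / ((β - 2) * x ^ (β - 2)) := by
  have hβ0 : 0 < β := by linarith
  refine ⟨fun α => (β - 2) / x * exp (-(α / β)), ?_, fun α _ => ?_⟩
  · have h := (tendsto_exp_atBot.comp (tendsto_neg_atTop_atBot.comp
      (tendsto_id.atTop_div_const hβ0))).const_mul ((β - 2) / x)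
    simpa using h
  have htail := sum_Icc_ceil_rpow_neg_le (p := β - 1) (by linarith)
    (mul_pos hx0 (exp_pos (α / β))) ⌊exp (α / β)⌋₊
  rw [neg_sub, show 1 - (β - 1) = 2 - β by ring, show β - 1 - 1 = β - 2 by ring] at htail
  rw [← exp_mul_powerLaw_tail_bound_eq hβ0.ne' (by linarith) hx0]
  calc _ ≤ ∑ i ∈ Finset.Icc ⌈x * exp (α / β)⌉₊ ⌊exp (α / β)⌋₊, exp α * (i : ℝ) ^ (1 - β) :=
        Finset.sum_le_sum fun i _ => natFloor_div_rpow_mul_le (exp_pos α).le β i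
    _ ≤ _ := by rw [← Finset.mul_sum]; gcongr

/-- Volume bound for the degree interval `[xΔ, Δ]` (with `Δ = e^{α/β}`) of an
`(α,β)`-power-law graph: it is at most `(1+o(1)) · e^{2α/β} / ((β-2) x^{β-2})` as `α → ∞`. -/
theorem stmt_12 (β : ℝ) (hβ : 2 < β) (x : ℝ) (hx0 : 0 < x) (hx1 : x ≤ 1) :
    ∃ f : ℝ → ℝ, Tendsto f atTop (nhds 0) ∧
      ∀ α : ℝ, 0 < α →
        (∑ i ∈ Finset.Icc ⌈x * Real.exp (α / β)⌉₊ ⌊Real.exp (α / β)⌋₊,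
            (⌊Real.exp α / (i : ℝ) ^ β⌋₊ : ℝ) * (i : ℝ)) ≤
          (1 + f α) * Real.exp (2 * α / β) / ((β - 2) * x ^ (β - 2)) :=
  stmt_12_general β hβ x hx0
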